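/- The L.P.R. procedure satisfies the Pareto condition: for any preference profile and any two alternatives x and y, if every voter prefers x to y, then y is not an L.P.R. winner. -/

import Mathlib

open Finset

attribute [local instance] Classical.propDecidable

noncomputable section

/-- A preference profile for `n` voters: each voter has a ballot, a list of
alternatives ordered from most preferred (head) to least preferred (last). -/
abbrev Profile (n : ℕ) (A : Type*) := Fin n → List A

variable {A : Type*} [DecidableEq A]

/-- A valid profile: every ballot is a strict linear order on the alternatives,
i.e. a duplicate-free list containing every alternative. -/
def IsProfile {n : ℕ} (P : Profile n A) : Prop :=
  ∀ i, (P i).Nodup ∧ ∀ a : A, a ∈ P i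

/-- The voter with ballot `l` prefers `x` to `y`. -/
def Prefers (l : List A) (x y : A) : Prop := l.idxOf x < l.idxOf y

/-- The number of voters who rank `a` last (at the bottom of their list). -/
def lastCount {n : ℕ} (P : Profile n A) (a : A) : ℕ :=
  (univ.filter fun i => (P i).getLast? = some a).card

/-- The number of voters who rank `a` first (at the top of their list). -/
def firstCount {n : ℕ} (P : Profile n A) (a : A) : ℕ :=
  (univ.filter fun i => (P i).head? = some a).card

/-- The number of voters preferring `x` to `y`. -/
def prefCount {n : ℕ} (P : Profile n A) (x y : A) : ℕ :=
  (univ.filter fun i => Prefers (P i) x y).card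

/-- `x` defeats `y` in a pairwise majority contest: strictly more voters
prefer `x` to `y` than prefer `y` to `x`. -/
def Defeats {n : ℕ} (P : Profile n A) (x y : A) : Prop :=
  prefCount P y x < prefCount P x y

/-- Condorcet's method: the winners are the alternatives defeated by no other alternative. -/
def CondorcetWinners {n : ℕ} (P : Profile n A) : Set A :=
  {a | ∀ b, ¬ Defeats P b a}

/-- `a` is a Condorcet winner: it is the unique winner of Condorcet's method. -/
def IsCondorcetWinner {n : ℕ} (P : Profile n A) (a : A) : Prop :=
  CondorcetWinners P = {a}

/-- The bottom alternative of ballot `l` among the still-remaining alternatives `S`. -/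
def bottomAmong (S : Finset A) (l : List A) : Option A :=
  (l.filter fun x => decide (x ∈ S)).getLast?

/-- The number of voters ranking `a` last among the remaining alternatives `S`. -/
def hLastCount {n : ℕ} (P : Profile n A) (S : Finset A) (a : A) : ℕ :=
  (univ.filter fun i => bottomAmong S (P i) = some a).card

/-- One round of the L.P.R. procedure: delete from `S` the alternative(s)
currently appearing at the bottom of the largest number of lists,
i.e. keep those that are not maximal. -/
def lprStep {n : ℕ} (P : Profile n A) (S : Finset A) : Finset A :=
  S.filter fun a => ∃ b ∈ S, hLastCount P S a < hLastCount P S b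

/-- Iterating the L.P.R. rounds; once a round would delete every remaining
alternative, the process stops (those alternatives are the ones deleted last). -/
def lprIter {n : ℕ} [Fintype A] (P : Profile n A) : ℕ → Finset A
  | 0 => Finset.univ
  | k + 1 =>
      let S := lprIter P k
      if lprStep P S = ∅ then S else lprStep P S

/-- L.P.R. winners: the alternative(s) deleted in the final round. -/
def LPRWinners {n : ℕ} [Fintype A] (P : Profile n A) : Finset A :=
  lprIter P (Fintype.card A)

/-! While `y` is still present, no voter ranks `x` last among the remaining alternatives, yet some
alternative is ranked last by at least one voter. Hence `x` survives every round, so no round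
deletes everything, and each round removes at least one alternative (one with the largest count).
If `y` were among the alternatives left after `|A|` rounds, `|A|` alternatives would already have
been removed, leaving nothing. -/

theorem List.exists_eq_append_cons_of_idxOf_lt {α : Type*} [DecidableEq α] {l : List α}
    {x y : α} (hy : y ∈ l) (hxy : l.idxOf x < l.idxOf y) :
    ∃ l₁ l₂, l = l₁ ++ x :: l₂ ∧ y ∈ l₂ := by
  induction l with
  | nil => simp at hy
  | cons a t ih =>
    by_cases hax : a = x
    · subst hax
      have hya : y ≠ a := by rintro rfl; simp at hxy
      exact ⟨[], t, rfl, (List.mem_cons.mp hy).resolve_left hya⟩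
    · have hay : a ≠ y := by rintro rfl; simp at hxy
      rw [List.idxOf_cons_ne t hax, List.idxOf_cons_ne t hay] at hxy
      obtain ⟨l₁, l₂, rfl, hy₂⟩ :=
        ih ((List.mem_cons.mp hy).resolve_left hay.symm) (Nat.lt_of_succ_lt_succ hxy)
      exact ⟨a :: l₁, l₂, rfl, hy₂⟩

theorem List.getLast?_filter_ne_of_idxOf_lt {α : Type*} [DecidableEq α] {l : List α}
    {x y : α} {p : α → Bool} (hl : l.Nodup) (hy : y ∈ l) (hpy : p y)
    (hxy : l.idxOf x < l.idxOf y) : (l.filter p).getLast? ≠ some x := by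
  obtain ⟨l₁, l₂, rfl, hy₂⟩ := List.exists_eq_append_cons_of_idxOf_lt hy hxy
  have hx₂ : x ∉ l₂ := fun hx ↦
    (List.nodup_cons.mp (List.nodup_middle.mp hl)).1 (List.mem_append_right l₁ hx)
  obtain ⟨z, hz⟩ : ∃ z, (l₂.filter p).getLast? = some z :=
    Option.isSome_iff_exists.mp <| List.getLast?_isSome.mpr <|
      List.ne_nil_of_mem (List.mem_filter.mpr ⟨hy₂, hpy⟩)
  rw [List.append_cons, List.filter_append, List.getLast?_append, hz, Option.some_or]
  rintro ⟨⟩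
  exact hx₂ (List.mem_filter.mp (List.mem_of_getLast? hz)).1

section LPR

variable {n : ℕ} {P : Profile n A}

theorem bottomAmong_mem {S : Finset A} {l : List A} {b : A} (h : bottomAmong S l = some b) :
    b ∈ S :=
  of_decide_eq_true (List.mem_filter.mp (List.mem_of_getLast? h)).2

theorem exists_bottomAmong_eq {S : Finset A} {l : List A} {s : A} (hs : s ∈ S) (hl : s ∈ l) :
    ∃ b, bottomAmong S l = some b :=
  Option.isSome_iff_exists.mp <| List.getLast?_isSome.mpr <|
    List.ne_nil_of_mem (List.mem_filter.mpr ⟨hl, decide_eq_true hs⟩)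

theorem exists_hLastCount_pos (hn : 0 < n) (hP : IsProfile P) {S : Finset A}
    (hS : S.Nonempty) : ∃ b ∈ S, 0 < hLastCount P S b := by
  obtain ⟨s, hs⟩ := hS
  obtain ⟨b, hb⟩ := exists_bottomAmong_eq hs ((hP ⟨0, hn⟩).2 s)
  exact ⟨b, bottomAmong_mem hb, Finset.card_pos.mpr ⟨⟨0, hn⟩, by simpa [hLastCount] using hb⟩⟩

theorem hLastCount_eq_zero_of_prefers (hP : IsProfile P) {x y : A}
    (h : ∀ i, Prefers (P i) x y) {S : Finset A} (hy : y ∈ S) : hLastCount P S x = 0 := by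
  refine Finset.card_eq_zero.mpr (Finset.filter_eq_empty_iff.mpr fun i _ ↦ ?_)
  exact List.getLast?_filter_ne_of_idxOf_lt (hP i).1 ((hP i).2 y) (decide_eq_true hy) (h i)

theorem lprStep_ssubset (P : Profile n A) {S : Finset A} (hS : S.Nonempty) :
    lprStep P S ⊂ S := by
  obtain ⟨m, hm, hmax⟩ := S.exists_max_image (hLastCount P S) hS
  refine Finset.ssubset_iff_of_subset (Finset.filter_subset _ _) |>.mpr ⟨m, hm, ?_⟩
  rintro hm'
  obtain ⟨-, b, hb, hlt⟩ := Finset.mem_filter.mp hm'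
  exact (hmax b hb).not_gt hlt

variable [Fintype A]

theorem lprIter_succ_subset (P : Profile n A) (k : ℕ) : lprIter P (k + 1) ⊆ lprIter P k := by
  rw [lprIter]
  split_ifs
  exacts [subset_rfl, Finset.filter_subset _ _]

theorem lprIter_succ_of_nonempty {k : ℕ} (h : (lprStep P (lprIter P k)).Nonempty) :
    lprIter P (k + 1) = lprStep P (lprIter P k) := by
  rw [lprIter, if_neg h.ne_empty]

theorem mem_lprIter_and_card_add_le (hn : 0 < n) (hP : IsProfile P) {x y : A}
    (h : ∀ i, Prefers (P i) x y) (k : ℕ) (hy : y ∈ lprIter P k) :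
    x ∈ lprIter P k ∧ #(lprIter P k) + k ≤ Fintype.card A := by
  induction k with
  | zero => simp [lprIter]
  | succ k ih =>
    obtain ⟨hx, hcard⟩ := ih (lprIter_succ_subset P k hy)
    have hxStep : x ∈ lprStep P (lprIter P k) := by
      obtain ⟨b, hb, hbpos⟩ := exists_hLastCount_pos hn hP ⟨x, hx⟩
      refine Finset.mem_filter.mpr ⟨hx, b, hb, ?_⟩
      rwa [hLastCount_eq_zero_of_prefers hP h (lprIter_succ_subset P k hy)]
    rw [lprIter_succ_of_nonempty ⟨x, hxStep⟩]
    have hshrink := Finset.card_lt_card (lprStep_ssubset P ⟨x, hx⟩)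
    exact ⟨hxStep, by omega⟩

end LPR

theorem lpr_pareto_general {A : Type*} [Fintype A] [DecidableEq A]
    {n : ℕ} (hn : 0 < n)
    (P : Profile n A) (hP : IsProfile P) (x y : A)
    (h : ∀ i, Prefers (P i) x y) : y ∉ LPRWinners P := by
  intro hy
  have hcard := (mem_lprIter_and_card_add_le hn hP h _ hy).2
  have hpos : 0 < #(lprIter P (Fintype.card A)) := Finset.card_pos.mpr ⟨y, hy⟩
  omega

/-- the L.P.R. procedure satisfies the Pareto condition:
if every voter prefers `x` to `y`, then `y` is not an L.P.R. winner. -/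
theorem lpr_pareto {A : Type*} [Fintype A] [DecidableEq A]
    (hA : 3 ≤ Fintype.card A) {n : ℕ} (hn : 0 < n)
    (P : Profile n A) (hP : IsProfile P) (x y : A)
    (h : ∀ i, Prefers (P i) x y) : y ∉ LPRWinners P :=
  lpr_pareto_general hn P hP x y h
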